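/- arXiv:1401.7032 — 3 statements merged into one kernel-verified Lean document; each statement's English description precedes it below -/
import Mathlib

section
/- Let P be a finite irreducible stochastic matrix with stationary distribution π and period r, with cyclic classes Ω_0,…,Ω_{r−1}. For i ∈ Ω_{l₁}, j ∈ Ω_{l₂}, and ℓ ≡ l₂ − l₁ (mod r), one has lim_{m→∞} (P^{mr+ℓ})_{ij} = π_j · r. -/
/-- A stochastic matrix over a countable set `Ω`: nonnegative entries and each row sums to 1. -/
def IsStochastic {Ω : Type*} (P : Ω → Ω → ℝ) : Prop :=
  (∀ i j, 0 ≤ P i j) ∧ ∀ i, HasSum (fun j => P i j) 1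

/-- Matrix product over a countable index set. -/
noncomputable def stochMul {Ω : Type*} (P Q : Ω → Ω → ℝ) : Ω → Ω → ℝ :=
  fun i k => ∑' j, P i j * Q j k

-- Matrix powers `P^n`.
open Classical in
noncomputable def stochPow {Ω : Type*} (P : Ω → Ω → ℝ) : ℕ → Ω → Ω → ℝ
  | 0 => fun i j => if i = j then 1 else 0
  | n + 1 => stochMul (stochPow P n) P

/-- `i` leads to `j`: there is a path (possibly of length 0) from `i` to `j`,
i.e. `(P^n)_{ij} > 0` for some `n ≥ 0`. -/
def LeadsTo {Ω : Type*} (P : Ω → Ω → ℝ) (i j : Ω) : Prop :=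
  ∃ n : ℕ, 0 < stochPow P n i j

/-- `i` and `j` communicate: each leads to the other. -/
def Communicates {Ω : Type*} (P : Ω → Ω → ℝ) (i j : Ω) : Prop :=
  LeadsTo P i j ∧ LeadsTo P j i

/-- `P` is irreducible: every pair of states communicates. -/
def StochIrreducible {Ω : Type*} (P : Ω → Ω → ℝ) : Prop :=
  ∀ i j : Ω, Communicates P i j

/-- A state `i` is recurrent when `∑_n (P^n)_{ii} = ∞`, i.e. the series is not summable
(the entries being nonnegative). -/
def IsRecurrentState {Ω : Type*} (P : Ω → Ω → ℝ) (i : Ω) : Prop :=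
  ¬ Summable (fun n : ℕ => stochPow P n i i)

/-- `P` is recurrent when every state is recurrent. -/
def IsRecurrent {Ω : Type*} (P : Ω → Ω → ℝ) : Prop :=
  ∀ i : Ω, IsRecurrentState P i

/-- `d` is the greatest common divisor of the set `S ⊆ ℕ`. -/
def IsGCDOf (d : ℕ) (S : Set ℕ) : Prop :=
  (∀ n ∈ S, d ∣ n) ∧ ∀ e : ℕ, (∀ n ∈ S, e ∣ n) → e ∣ d

/-!
Label each state `x` by the residue `c x ∈ ZMod r` of the length of any path from `ω` to `x`;
this is well defined because `r` divides every return time to `ω`, and every positive entry of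
`P` raises the label by one. On a fixed class `Ω_l` the block `Q` of `P ^ r` is then stochastic,
and it is primitive: `r` is the gcd of the return times, so all large multiples of `r` are return
times. For a primitive stochastic matrix the spread `max - min` of a column of `Q ^ k` contracts
geometrically (Doeblin's argument), while a stationary vector averages that column, so
`(Q ^ k) x y` converges to it. Stationarity of `π` forces the `r` classes to carry equal mass
`1 / r`, so `r π` restricted to `Ω_l` is the stationary vector of `Q`. Finally
`P^{mr+ℓ}_{ij} = ∑_z P^ℓ_{iz} P^{mr}_{zj}`, and only states `z` of the class of `j` contribute.
-/

open Filter Topology Finset Matrix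

section Spread

variable {α : Type*} [Fintype α] [Nonempty α]

noncomputable def spread (v : α → ℝ) : ℝ :=
  univ.sup' univ_nonempty v - univ.inf' univ_nonempty v

lemma spread_nonneg (v : α → ℝ) : 0 ≤ spread v :=
  sub_nonneg.2 ((inf'_le _ (mem_univ (Classical.arbitrary α))).trans (le_sup' _ (mem_univ _)))

variable {w v : α → ℝ}

lemma inf'_le_sum_mul (hw0 : ∀ x, 0 ≤ w x) (hw1 : ∑ x, w x = 1) :
    univ.inf' univ_nonempty v ≤ ∑ x, w x * v x :=
  calc univ.inf' univ_nonempty v = ∑ x, w x * univ.inf' univ_nonempty v := by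
        rw [← sum_mul, hw1, one_mul]
    _ ≤ ∑ x, w x * v x :=
        sum_le_sum fun x _ => mul_le_mul_of_nonneg_left (inf'_le _ (mem_univ x)) (hw0 x)

lemma sum_mul_le_sup' (hw0 : ∀ x, 0 ≤ w x) (hw1 : ∑ x, w x = 1) :
    ∑ x, w x * v x ≤ univ.sup' univ_nonempty v :=
  calc ∑ x, w x * v x ≤ ∑ x, w x * univ.sup' univ_nonempty v :=
        sum_le_sum fun x _ => mul_le_mul_of_nonneg_left (le_sup' _ (mem_univ x)) (hw0 x)
    _ = univ.sup' univ_nonempty v := by rw [← sum_mul, hw1, one_mul]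

end Spread

lemma tendsto_zero_of_antitone_of_le_mul {D : ℕ → ℝ} (hD0 : ∀ k, 0 ≤ D k) (hD : Antitone D)
    {N : ℕ} (hN : 0 < N) {q : ℝ} (hq0 : 0 ≤ q) (hq1 : q < 1) (hDN : ∀ k, D (k + N) ≤ q * D k) :
    Tendsto D atTop (𝓝 0) := by
  have hgeom : ∀ m, D (m * N) ≤ q ^ m * D 0 := by
    intro m
    induction m with
    | zero => simp
    | succ m ih =>
      calc D ((m + 1) * N) ≤ q * D (m * N) := by rw [add_one_mul]; exact hDN _
        _ ≤ q ^ (m + 1) * D 0 := by rw [pow_succ', mul_assoc]; gcongr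
  have hbound : ∀ k, D k ≤ q ^ (k / N) * D 0 := fun k =>
    (hD (Nat.div_mul_le_self k N)).trans (hgeom _)
  refine squeeze_zero hD0 hbound ?_
  simpa only [zero_mul, Function.comp_def] using
    ((tendsto_pow_atTop_nhds_zero_of_lt_one hq0 hq1).mul_const (D 0)).comp
      (Nat.tendsto_div_const_atTop hN.ne')

lemma sum_subtype_eq_sum_of_eq_zero {ι M : Type*} [Fintype ι] [AddCommMonoid M] {p : ι → Prop}
    [DecidablePred p] {f : ι → M} (hf : ∀ i, ¬ p i → f i = 0) :
    ∑ i : {i // p i}, f i = ∑ i, f i :=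
  calc ∑ i : {i // p i}, f i = ∑ i : {i // p i}, f i + ∑ i : {i // ¬ p i}, f i := by
        rw [Fintype.sum_eq_zero (fun i : {i // ¬ p i} => f i) fun i => hf i i.2, add_zero]
    _ = ∑ i, f i := Fintype.sum_subtype_add_sum_subtype p f

namespace Matrix

lemma vecMul_pow_eq_self {n R : Type*} [Fintype n] [DecidableEq n] [Semiring R]
    {A : Matrix n n R} {v : n → R} (h : v ᵥ* A = v) (k : ℕ) : v ᵥ* A ^ k = v := by
  induction k with
  | zero => simp
  | succ k ih => rw [pow_succ, ← vecMul_vecMul, ih, h]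

section Contraction

variable {α : Type*} [Fintype α] [DecidableEq α] {S : Matrix α α ℝ}

lemma mulVec_apply_le_sup'_sub [Nonempty α] (hS : S ∈ rowStochastic ℝ α) {ε : ℝ}
    (hε : ∀ x y, ε ≤ S x y) (v : α → ℝ) (x : α) :
    (S *ᵥ v) x ≤ univ.sup' univ_nonempty v - ε * spread v := by
  obtain ⟨y, -, hy⟩ := exists_mem_eq_inf' univ_nonempty v
  set M := univ.sup' univ_nonempty v
  have hgap : S x y * (M - v y) ≤ ∑ z, S x z * (M - v z) :=
    single_le_sum (f := fun z => S x z * (M - v z)) (fun z _ => mul_nonneg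
      (nonneg_of_mem_rowStochastic hS) (sub_nonneg.2 (le_sup' v (mem_univ z)))) (mem_univ y)
  have hsplit : (S *ᵥ v) x = M - ∑ z, S x z * (M - v z) := by
    simp only [mulVec, dotProduct, mul_sub, sum_sub_distrib, ← sum_mul,
      sum_row_of_mem_rowStochastic hS, one_mul, sub_sub_cancel]
  have hε_gap : ε * (M - v y) ≤ S x y * (M - v y) :=
    mul_le_mul_of_nonneg_right (hε x y) (sub_nonneg.2 (le_sup' v (mem_univ y)))
  rw [hsplit, spread, hy]
  linarith

lemma spread_mulVec_le [Nonempty α] (hS : S ∈ rowStochastic ℝ α) {ε : ℝ}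
    (hε : ∀ x y, ε ≤ S x y) (v : α → ℝ) : spread (S *ᵥ v) ≤ (1 - ε) * spread v := by
  have hsup : univ.sup' univ_nonempty (S *ᵥ v) ≤ univ.sup' univ_nonempty v - ε * spread v :=
    sup'_le _ _ fun x _ => mulVec_apply_le_sup'_sub hS hε v x
  have hinf : univ.inf' univ_nonempty v ≤ univ.inf' univ_nonempty (S *ᵥ v) :=
    le_inf' _ _ fun x _ => inf'_le_sum_mul (fun y => nonneg_of_mem_rowStochastic hS)
      (sum_row_of_mem_rowStochastic hS x)
  simp only [spread] at *
  linarith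

theorem tendsto_pow_apply_of_isPrimitive (hS : S ∈ rowStochastic ℝ α) (hprim : S.IsPrimitive)
    {μ : α → ℝ} (hμ0 : ∀ x, 0 ≤ μ x) (hμ1 : ∑ x, μ x = 1) (hμ : μ ᵥ* S = μ) (x y : α) :
    Tendsto (fun k => (S ^ k) x y) atTop (𝓝 (μ y)) := by
  have : Nonempty α := ⟨x⟩
  obtain ⟨N, hN0, hNpos⟩ := hprim.exists_pos_pow
  obtain ⟨ε, hε0, hε⟩ : ∃ ε > 0, ∀ a b, ε ≤ (S ^ N) a b := by
    obtain ⟨p, -, hp⟩ := exists_min_image univ (fun p : α × α => (S ^ N) p.1 p.2) univ_nonempty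
    exact ⟨_, hNpos p.1 p.2, fun a b => hp (a, b) (mem_univ _)⟩
  set col : ℕ → α → ℝ := fun k z => (S ^ k) z y
  have hcol : ∀ m k, col (m + k) = S ^ m *ᵥ col k := fun m k => by
    ext z
    simp only [col, pow_add, mul_apply, mulVec, dotProduct]
  have hspread : Tendsto (fun k => spread (col k)) atTop (𝓝 0) := by
    refine tendsto_zero_of_antitone_of_le_mul (fun k => spread_nonneg _) ?_ hN0
      (sub_nonneg.2 ((hε x x).trans (le_one_of_mem_rowStochastic (pow_mem hS N))))
      (sub_lt_self 1 hε0) fun k => ?_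
    · refine antitone_nat_of_succ_le fun k => ?_
      simpa [add_comm k 1, hcol 1 k] using spread_mulVec_le (pow_mem hS 1) (ε := 0)
        (fun _ _ => nonneg_of_mem_rowStochastic (pow_mem hS 1)) (col k)
    · rw [add_comm, hcol]
      exact spread_mulVec_le (pow_mem hS N) hε _
  have hμy : ∀ k, μ y = ∑ z, μ z * col k z := fun k =>
    (congrFun (vecMul_pow_eq_self hμ k) y).symm
  refine tendsto_sub_nhds_zero_iff.1 (squeeze_zero_norm (fun k => ?_) hspread)
  rw [Real.norm_eq_abs, hμy k]
  exact abs_sub_le_of_le_of_le (inf'_le _ (mem_univ x)) (le_sup' (col k) (mem_univ x))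
    (inf'_le_sum_mul hμ0 hμ1) (sum_mul_le_sup' hμ0 hμ1)

end Contraction

section Paths

variable {n R : Type*} [Fintype n] [DecidableEq n] [Ring R] [LinearOrder R] [IsStrictOrderedRing R]
  {A : Matrix n n R}

lemma pow_add_apply_pos (hA : ∀ i j, 0 ≤ A i j) {a b : ℕ} {i j k : n}
    (ha : 0 < (A ^ a) i j) (hb : 0 < (A ^ b) j k) : 0 < (A ^ (a + b)) i k := by
  rw [pow_add, mul_apply]
  exact (sum_pos_iff_of_nonneg fun l _ =>
    mul_nonneg (pow_apply_nonneg hA a i l) (pow_apply_nonneg hA b l k)).2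
    ⟨j, mem_univ j, mul_pos ha hb⟩

lemma exists_pos_of_pow_succ_apply_pos (hA : ∀ i j, 0 ≤ A i j) {k : ℕ} {i j : n}
    (h : 0 < (A ^ (k + 1)) i j) : ∃ l, 0 < (A ^ k) i l ∧ 0 < A l j := by
  rw [pow_succ, mul_apply, sum_pos_iff_of_nonneg fun l _ =>
    mul_nonneg (pow_apply_nonneg hA k i l) (hA l j)] at h
  obtain ⟨l, -, hl⟩ := h
  exact ⟨l, pos_of_mul_pos_left hl (hA l j), pos_of_mul_pos_right hl (pow_apply_nonneg hA k i l)⟩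

lemma eventually_pos_pow_mul_of_isGCDOf (hA : ∀ i j, 0 ≤ A i j) {d : ℕ} (hd0 : 0 < d) {x : n}
    (hd : IsGCDOf d {k | 0 < k ∧ 0 < (A ^ k) x x}) : ∀ᶠ m in atTop, 0 < (A ^ (m * d)) x x := by
  set s : Set ℕ := {k | 0 < (A ^ k) x x}
  have hclosure : ∀ k ∈ AddSubmonoid.closure s, k ∈ s := fun k hk => by
    induction hk using AddSubmonoid.closure_induction with
    | mem k hk => exact hk
    | zero => simp [s]
    | add a b _ _ ha hb => exact pow_add_apply_pos hA ha hb
  have hgcd : Nat.setGcd s = d :=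
    Nat.dvd_antisymm (hd.2 _ fun k hk => Nat.setGcd_dvd_of_mem hk.2)
      (Nat.dvd_setGcd_iff.2 fun k hk =>
        k.eq_zero_or_pos.elim (fun h => h ▸ dvd_zero d) fun h => hd.1 k ⟨h, hk⟩)
  obtain ⟨N, hN⟩ := Nat.exists_mem_closure_of_ge s
  filter_upwards [eventually_ge_atTop N] with m hm
  exact hclosure _ (hN _ (hm.trans (Nat.le_mul_of_pos_right m hd0)) (hgcd ▸ dvd_mul_left d m))

/-- The state `x` lies in the cyclic class `Ω_{c x}`. -/
def IsCyclicLabelling (A : Matrix n n R) (r : ℕ) (c : n → ZMod r) : Prop :=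
  ∀ x y, 0 < A x y → c y = c x + 1

variable {r : ℕ} {c : n → ZMod r}

lemma IsCyclicLabelling.eq_add_of_pow_apply_pos (hc : A.IsCyclicLabelling r c)
    (hA : ∀ i j, 0 ≤ A i j) {k : ℕ} {x y : n} (h : 0 < (A ^ k) x y) : c y = c x + k := by
  induction k generalizing y with
  | zero =>
    rw [pow_zero, one_apply] at h
    split_ifs at h with hxy
    · simp [hxy]
    · exact absurd h (lt_irrefl 0)
  | succ k ih =>
    obtain ⟨l, hl, hly⟩ := exists_pos_of_pow_succ_apply_pos hA h
    rw [hc l y hly, ih hl]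
    push_cast
    ring

lemma IsCyclicLabelling.pow_mul_apply_eq_zero (hc : A.IsCyclicLabelling r c)
    (hA : ∀ i j, 0 ≤ A i j) (k : ℕ) {x y : n} (hxy : c x ≠ c y) : (A ^ (k * r)) x y = 0 := by
  by_contra h
  apply hxy
  simpa using (hc.eq_add_of_pow_apply_pos hA ((pow_apply_nonneg hA _ x y).lt_of_ne' h)).symm

lemma exists_isCyclicLabelling (hA : ∀ i j, 0 ≤ A i j) (hirr : ∀ x y, ∃ k, 0 < (A ^ k) x y)
    {ω : n} (hret : ∀ k, 0 < (A ^ k) ω ω → r ∣ k) :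
    ∃ c : n → ZMod r, A.IsCyclicLabelling r c ∧ ∀ (k : ℕ) x, 0 < (A ^ k) ω x → c x = k := by
  have hcongr : ∀ {a b : ℕ} {x : n}, 0 < (A ^ a) ω x → 0 < (A ^ b) ω x → (a : ZMod r) = b := by
    intro a b x ha hb
    obtain ⟨k, hk⟩ := hirr x ω
    have h1 := (ZMod.natCast_eq_zero_iff _ r).2 (hret _ (pow_add_apply_pos hA ha hk))
    have h2 := (ZMod.natCast_eq_zero_iff _ r).2 (hret _ (pow_add_apply_pos hA hb hk))
    push_cast at h1 h2
    exact add_right_cancel (h1.trans h2.symm)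
  choose f hf using hirr ω
  refine ⟨fun x => f x, fun x y hxy => ?_, fun k x hk => hcongr (hf x) hk⟩
  have := hcongr (pow_add_apply_pos hA (hf x) (by rwa [pow_one] : 0 < (A ^ 1) x y)) (hf y)
  push_cast at this
  exact this.symm

lemma IsCyclicLabelling.eventually_pos_pow_mul (hc : A.IsCyclicLabelling r c)
    (hA : ∀ i j, 0 ≤ A i j) (hirr : ∀ x y, ∃ k, 0 < (A ^ k) x y) {ω : n}
    (hω : ∀ᶠ m in atTop, 0 < (A ^ (m * r)) ω ω) {x y : n} (hxy : c x = c y) :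
    ∀ᶠ m in atTop, 0 < (A ^ (m * r)) x y := by
  obtain ⟨a, ha⟩ := hirr x ω
  obtain ⟨b, hb⟩ := hirr ω y
  obtain ⟨q, hq⟩ : r ∣ a + b := by
    have := hc.eq_add_of_pow_apply_pos hA (pow_add_apply_pos hA ha hb)
    rw [hxy, left_eq_add] at this
    exact (ZMod.natCast_eq_zero_iff _ r).1 this
  filter_upwards [eventually_ge_atTop q, (tendsto_sub_atTop_nat q).eventually hω] with m hm hmω
  obtain ⟨t, rfl⟩ := Nat.exists_eq_add_of_le hm
  rw [Nat.add_sub_cancel_left] at hmω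
  have hsplit : (q + t) * r = a + (t * r + b) := by linarith [hq]
  rw [hsplit]
  exact pow_add_apply_pos hA ha (pow_add_apply_pos hA hmω hb)

end Paths

lemma submatrix_val_mul {n R : Type*} [Fintype n] [Semiring R] {p : n → Prop} [DecidablePred p]
    (A B : Matrix n n R) (hB : ∀ z y, ¬ p z → p y → B z y = 0) :
    ((A * B).submatrix (↑) (↑) : Matrix {x // p x} {x // p x} R) =
      A.submatrix (↑) (↑) * B.submatrix (↑) (↑) := by
  ext x y
  simp only [submatrix_apply, mul_apply]
  exact (sum_subtype_eq_sum_of_eq_zero fun z hz => by rw [hB z y hz y.2, mul_zero]).symm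

section Stationary

variable {n : Type*} [Fintype n] [DecidableEq n] {A : Matrix n n ℝ} {π : n → ℝ}

lemma sum_eq_sum_of_vecMul_eq_self (hA : A ∈ rowStochastic ℝ n) (hπ : π ᵥ* A = π)
    {s t : Finset n} (hst : ∀ x y, 0 < A x y → (x ∈ s ↔ y ∈ t)) :
    ∑ x ∈ s, π x = ∑ y ∈ t, π y := by
  have hpos : ∀ {x y}, A x y ≠ 0 → 0 < A x y := fun h =>
    (nonneg_of_mem_rowStochastic hA).lt_of_ne' h
  have hrow : ∀ x, ∑ y ∈ t, A x y = if x ∈ s then 1 else 0 := by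
    intro x
    split_ifs with hx
    · rw [← sum_row_of_mem_rowStochastic hA x]
      exact sum_subset (subset_univ t) fun y _ hy =>
        not_not.1 fun h => hy ((hst x y (hpos h)).1 hx)
    · exact sum_eq_zero fun y hy => not_not.1 fun h => hx ((hst x y (hpos h)).2 hy)
  calc ∑ x ∈ s, π x = ∑ x, π x * ∑ y ∈ t, A x y := by simp [hrow]
    _ = ∑ y ∈ t, (π ᵥ* A) y := by simp only [vecMul, dotProduct, mul_sum]; exact sum_comm
    _ = ∑ y ∈ t, π y := by rw [hπ]

variable {r : ℕ} {c : n → ZMod r}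

lemma IsCyclicLabelling.sum_fiber_add_one (hc : A.IsCyclicLabelling r c)
    (hA : A ∈ rowStochastic ℝ n) (hπ : π ᵥ* A = π) (a : ZMod r) :
    ∑ x with c x = a + 1, π x = ∑ x with c x = a, π x :=
  (sum_eq_sum_of_vecMul_eq_self hA hπ fun x y hxy => by simp [hc x y hxy]).symm

lemma IsCyclicLabelling.card_mul_sum_fiber [NeZero r] (hc : A.IsCyclicLabelling r c)
    (hA : A ∈ rowStochastic ℝ n) (hπ : π ᵥ* A = π) (a : ZMod r) :
    r * ∑ x with c x = a, π x = ∑ x, π x := by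
  have hconst : ∀ b : ZMod r, ∑ x with c x = b, π x = ∑ x with c x = a, π x := by
    suffices ∀ k : ℕ, ∑ x with c x = a + k, π x = ∑ x with c x = a, π x by
      intro b
      simpa using this (b - a).val
    intro k
    induction k with
    | zero => simp
    | succ k ih => rw [Nat.cast_succ, ← add_assoc, hc.sum_fiber_add_one hA hπ, ih]
  rw [← sum_fiberwise univ c π, sum_congr rfl fun b _ => hconst b, sum_const, card_univ,
    ZMod.card, nsmul_eq_mul]

end Stationary

section CyclicClass

variable {n : Type*} [Fintype n] [DecidableEq n] {A : Matrix n n ℝ} {π : n → ℝ} {r : ℕ}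
  {c : n → ZMod r}

def cyclicBlock (A : Matrix n n ℝ) (r : ℕ) (c : n → ZMod r) (l : ZMod r) :
    Matrix {x // c x = l} {x // c x = l} ℝ :=
  (A ^ r).submatrix Subtype.val Subtype.val

@[simp]
lemma cyclicBlock_apply (l : ZMod r) (x y : {x // c x = l}) :
    cyclicBlock A r c l x y = (A ^ r) x y := rfl

lemma IsCyclicLabelling.pow_cyclicBlock (hc : A.IsCyclicLabelling r c) (hA : ∀ i j, 0 ≤ A i j)
    (l : ZMod r) (k : ℕ) :
    cyclicBlock A r c l ^ k = (A ^ (k * r)).submatrix Subtype.val Subtype.val := by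
  induction k with
  | zero => simp [submatrix_one _ Subtype.val_injective]
  | succ k ih =>
    rw [pow_succ, ih, cyclicBlock, ← submatrix_val_mul, ← pow_add, add_one_mul]
    intro z y hz hy
    simpa using hc.pow_mul_apply_eq_zero hA 1 fun h => hz (h.trans hy)

lemma IsCyclicLabelling.cyclicBlock_mem_rowStochastic (hc : A.IsCyclicLabelling r c)
    (hA : A ∈ rowStochastic ℝ n) (l : ZMod r) :
    cyclicBlock A r c l ∈ rowStochastic ℝ {x // c x = l} := by
  refine mem_rowStochastic_iff_sum.2 ⟨fun x y => nonneg_of_mem_rowStochastic (pow_mem hA r),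
    fun x => ?_⟩
  rw [← sum_row_of_mem_rowStochastic (pow_mem hA r) x.1]
  refine sum_subtype_eq_sum_of_eq_zero (f := fun z => (A ^ r) x z) fun z hz => ?_
  simpa using hc.pow_mul_apply_eq_zero (fun _ _ => nonneg_of_mem_rowStochastic hA) 1
    fun h => hz (x.2.symm.trans h).symm

lemma IsCyclicLabelling.vecMul_cyclicBlock (hc : A.IsCyclicLabelling r c)
    (hA : ∀ i j, 0 ≤ A i j) (hπ : π ᵥ* A = π) (l : ZMod r) :
    (fun x : {x // c x = l} => π x * r) ᵥ* cyclicBlock A r c l =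
      fun x : {x // c x = l} => π x * r := by
  funext y
  simp only [vecMul, dotProduct, cyclicBlock_apply, mul_right_comm _ (r : ℝ), ← sum_mul]
  rw [sum_subtype_eq_sum_of_eq_zero (f := fun x => π x * (A ^ r) x y) fun x hx => by
    simpa using Or.inr (hc.pow_mul_apply_eq_zero hA 1 fun h => hx (h.trans y.2))]
  exact congrArg (· * (r : ℝ)) (congrFun (vecMul_pow_eq_self hπ r) y.1)

lemma IsCyclicLabelling.sum_subtype_mul_eq_sum [NeZero r] (hc : A.IsCyclicLabelling r c)
    (hA : A ∈ rowStochastic ℝ n) (hπ : π ᵥ* A = π) (l : ZMod r) :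
    ∑ x : {x // c x = l}, π x * r = ∑ x, π x := by
  rw [← sum_mul, mul_comm, ← hc.card_mul_sum_fiber hA hπ l,
    sum_subtype (p := fun x => c x = l) _ (by simp)]

theorem IsCyclicLabelling.tendsto_pow_mul_apply [NeZero r] (hc : A.IsCyclicLabelling r c)
    (hA : A ∈ rowStochastic ℝ n) (hirr : ∀ x y, ∃ k, 0 < (A ^ k) x y) {ω : n}
    (hω : ∀ᶠ m in atTop, 0 < (A ^ (m * r)) ω ω) (hπ0 : ∀ x, 0 ≤ π x) (hπ1 : ∑ x, π x = 1)
    (hπ : π ᵥ* A = π) {x y : n} (hxy : c x = c y) :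
    Tendsto (fun m => (A ^ (m * r)) x y) atTop (𝓝 (π y * r)) := by
  have hA0 : ∀ i j, 0 ≤ A i j := fun _ _ => nonneg_of_mem_rowStochastic hA
  have hQ := hc.cyclicBlock_mem_rowStochastic hA (c y)
  have hprim : (cyclicBlock A r c (c y)).IsPrimitive := by
    obtain ⟨k, hk, hk0⟩ := ((eventually_all.2 fun a : {x // c x = c y} => eventually_all.2
      fun b : {x // c x = c y} => hc.eventually_pos_pow_mul hA0 hirr hω (a.2.trans b.2.symm)).and
      (eventually_gt_atTop 0)).exists
    exact ⟨fun _ _ => nonneg_of_mem_rowStochastic hQ, k, hk0, fun a b => by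
      rw [hc.pow_cyclicBlock hA0]; exact hk a b⟩
  have := tendsto_pow_apply_of_isPrimitive hQ hprim (fun a => mul_nonneg (hπ0 a) r.cast_nonneg)
    (by rw [hc.sum_subtype_mul_eq_sum hA hπ, hπ1]) (hc.vecMul_cyclicBlock hA0 hπ _)
    ⟨x, hxy⟩ ⟨y, rfl⟩
  simpa only [hc.pow_cyclicBlock hA0, submatrix_apply] using this

theorem IsCyclicLabelling.tendsto_pow_mul_add_apply [NeZero r] (hc : A.IsCyclicLabelling r c)
    (hA : A ∈ rowStochastic ℝ n) (hirr : ∀ x y, ∃ k, 0 < (A ^ k) x y) {ω : n}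
    (hω : ∀ᶠ m in atTop, 0 < (A ^ (m * r)) ω ω) (hπ0 : ∀ x, 0 ≤ π x) (hπ1 : ∑ x, π x = 1)
    (hπ : π ᵥ* A = π) {i j : n} {ℓ : ℕ} (hij : c j = c i + ℓ) :
    Tendsto (fun m => (A ^ (m * r + ℓ)) i j) atTop (𝓝 (π j * r)) := by
  have hterm : ∀ z, Tendsto (fun m => (A ^ ℓ) i z * (A ^ (m * r)) z j) atTop
      (𝓝 ((A ^ ℓ) i z * (π j * r))) := by
    intro z
    rcases (nonneg_of_mem_rowStochastic (pow_mem hA ℓ) (i := i) (j := z)).eq_or_lt with h | h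
    · simp [← h]
    · refine (hc.tendsto_pow_mul_apply hA hirr hω hπ0 hπ1 hπ ?_).const_mul _
      rw [hc.eq_add_of_pow_apply_pos (fun _ _ => nonneg_of_mem_rowStochastic hA) h, hij]
  have := tendsto_finsetSum univ fun z _ => hterm z
  rw [← sum_mul, sum_row_of_mem_rowStochastic (pow_mem hA ℓ) i, one_mul] at this
  refine this.congr fun m => ?_
  rw [add_comm, pow_add, mul_apply]

end CyclicClass

end Matrix

lemma stochPow_eq_pow {Ω : Type*} [Fintype Ω] [DecidableEq Ω] (P : Ω → Ω → ℝ) (k : ℕ) (i j : Ω) :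
    stochPow P k i j = (Matrix.of P ^ k) i j := by
  induction k generalizing j with
  | zero => simp only [stochPow, pow_zero, one_apply]; congr
  | succ k ih => simp only [stochPow, stochMul, tsum_fintype, ih, pow_succ, mul_apply, of_apply]

lemma IsStochastic.mem_rowStochastic {Ω : Type*} [Fintype Ω] [DecidableEq Ω] {P : Ω → Ω → ℝ}
    (hP : IsStochastic P) : Matrix.of P ∈ rowStochastic ℝ Ω :=
  mem_rowStochastic_iff_sum.2 ⟨hP.1, fun i => (hasSum_fintype _).unique (hP.2 i)⟩

open Filter in
theorem convergence_positive_recurrent_general {Ω : Type*} [Fintype Ω] {P : Ω → Ω → ℝ}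
    (hP : IsStochastic P) (hirr : StochIrreducible P)
    (π : Ω → ℝ) (hπ0 : ∀ i, 0 ≤ π i) (hπ1 : ∑ i, π i = 1)
    (hstat : ∀ j, ∑ i, π i * P i j = π j)
    (ω : Ω) (r : ℕ) (hr0 : 0 < r)
    (hr : IsGCDOf r {n : ℕ | 0 < n ∧ 0 < stochPow P n ω ω})
    (i j : Ω) (l₁ l₂ ℓ : ℕ)
    (hi : ∀ n : ℕ, 0 < stochPow P n ω i → n % r = l₁)
    (hj : ∀ n : ℕ, 0 < stochPow P n ω j → n % r = l₂)
    (hmod : (l₁ + ℓ) % r = l₂) :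
    Tendsto (fun m : ℕ => stochPow P (m * r + ℓ) i j) atTop (nhds (π j * r)) := by
  classical
  have : NeZero r := ⟨hr0.ne'⟩
  have hA := hP.mem_rowStochastic
  have hA0 : ∀ x y, 0 ≤ Matrix.of P x y := fun _ _ => nonneg_of_mem_rowStochastic hA
  have hirr' : ∀ x y, ∃ k, 0 < (Matrix.of P ^ k) x y := fun x y => by
    simpa only [LeadsTo, stochPow_eq_pow] using (hirr x y).1
  simp only [stochPow_eq_pow] at hr hi hj ⊢
  have hret : ∀ k, 0 < (Matrix.of P ^ k) ω ω → r ∣ k := fun k hk =>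
    k.eq_zero_or_pos.elim (fun h => h ▸ dvd_zero r) fun h => hr.1 k ⟨h, hk⟩
  obtain ⟨c, hc, hcω⟩ := exists_isCyclicLabelling hA0 hirr' hret
  have hclass : ∀ x l, (∀ k, 0 < (Matrix.of P ^ k) ω x → k % r = l) → c x = l := fun x l h => by
    obtain ⟨k, hk⟩ := hirr' ω x
    rw [hcω k x hk, ← ZMod.natCast_mod, h k hk]
  refine hc.tendsto_pow_mul_add_apply hA hirr' (eventually_pos_pow_mul_of_isGCDOf hA0 hr0 hr)
    hπ0 hπ1 (funext hstat) ?_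
  rw [hclass j l₂ hj, hclass i l₁ hi, ← hmod, ZMod.natCast_mod, Nat.cast_add]

open Filter in
/-- convergence theorem for finite irreducible stochastic matrices.  If `π` is the
stationary distribution of the finite irreducible matrix `P` of period `r`, and `i ∈ Ω_{l₁}`,
`j ∈ Ω_{l₂}` are in the indicated cyclic classes (relative to a reference state `ω`), and
`ℓ ≡ l₂ - l₁ (mod r)`, then `(P^{mr+ℓ})_{ij} → π_j · r` as `m → ∞`. -/
theorem convergence_positive_recurrent {Ω : Type*} [Fintype Ω] {P : Ω → Ω → ℝ}
    (hP : IsStochastic P) (hirr : StochIrreducible P)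
    (π : Ω → ℝ) (hπ0 : ∀ i, 0 ≤ π i) (hπ1 : ∑ i, π i = 1)
    (hstat : ∀ j, ∑ i, π i * P i j = π j)
    (ω : Ω) (r : ℕ) (hr0 : 0 < r)
    (hr : IsGCDOf r {n : ℕ | 0 < n ∧ 0 < stochPow P n ω ω})
    (i j : Ω) (l₁ l₂ ℓ : ℕ) (hl₁ : l₁ < r) (hl₂ : l₂ < r) (hℓ : ℓ < r)
    (hi : ∀ n : ℕ, 0 < stochPow P n ω i → n % r = l₁)
    (hj : ∀ n : ℕ, 0 < stochPow P n ω j → n % r = l₂)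
    (hmod : (l₁ + ℓ) % r = l₂) :
    Tendsto (fun m : ℕ => stochPow P (m * r + ℓ) i j) atTop (nhds (π j * r)) :=
  convergence_positive_recurrent_general hP hirr π hπ0 hπ1 hstat ω r hr0 hr i j l₁ l₂ ℓ hi hj hmod
end

section
/- Let T be a Moebius automorphism of the closed unit disc. Then there exist λ, θ ∈ 𝕋 (unit circle) such that T(θ · T^{−1}(λ · T(0))) = 0. -/
/-!
All the points `λ T(0)` with `|λ| = 1` lie on the circle of radius `‖T(0)‖ = ‖w‖`, and
`T⁻¹(λ T(0)) = w (1 - λ) / (1 - λ ‖w‖²)`. Choosing `Re λ = (1 + ‖w‖²)/2` makes the two factors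
`1 - λ` and `1 - λ ‖w‖²` equal in modulus, so `T⁻¹(λ T(0))` has the same modulus as `w = T⁻¹(0)`
and a rotation `θ` carries it to `w`.
-/

/-- The Moebius automorphism `z ↦ α (z - w)/(1 - w̄ z)` of the (closed) unit disc,
for `|α| = 1` and `|w| < 1`. -/
noncomputable def moebius (α w z : ℂ) : ℂ :=
  α * (z - w) / (1 - (starRingEnd ℂ) w * z)

/-- The inverse Moebius transformation of `moebius α w`. -/
noncomputable def moebiusInv (α w z : ℂ) : ℂ :=
  (z / α + w) / (1 + (starRingEnd ℂ) w * (z / α))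

open ComplexConjugate

namespace Complex

lemma exists_norm_eq_one_re_eq {x : ℝ} (hx : |x| ≤ 1) : ∃ z : ℂ, ‖z‖ = 1 ∧ z.re = x := by
  refine ⟨⟨x, √(1 - x ^ 2)⟩, ?_, rfl⟩
  have hx2 : x ^ 2 ≤ 1 := sq_le_one_iff_abs_le_one x |>.mpr hx
  rw [norm_def, normSq_mk, ← sq, ← sq, Real.sq_sqrt (by linarith)]
  simp

lemma exists_norm_eq_one_mul_eq {a b : ℂ} (h : ‖a‖ = ‖b‖) : ∃ θ : ℂ, ‖θ‖ = 1 ∧ θ * a = b := by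
  rcases eq_or_ne a 0 with rfl | ha
  · exact ⟨1, norm_one, by simpa [eq_comm] using h⟩
  · refine ⟨b / a, ?_, div_mul_cancel₀ b ha⟩
    rw [norm_div, h, div_self (h ▸ norm_ne_zero_iff.mpr ha)]

lemma norm_one_sub_mul_ofReal_eq_norm_one_sub {z : ℂ} {s : ℝ} (hz : ‖z‖ = 1)
    (hre : z.re = (1 + s) / 2) : ‖1 - z * s‖ = ‖1 - z‖ := by
  have hsq : z.re ^ 2 + z.im ^ 2 = 1 := by
    have := Complex.sq_norm z
    rw [hz, normSq_apply] at this
    linarith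
  rw [← sq_eq_sq₀ (norm_nonneg _) (norm_nonneg _), Complex.sq_norm, Complex.sq_norm,
    normSq_apply, normSq_apply]
  simp only [sub_re, sub_im, mul_re, mul_im, one_re, one_im, ofReal_re, ofReal_im]
  linear_combination (s ^ 2 - 1) * hsq + (2 - 2 * s) * hre

end Complex

lemma moebius_self (α w : ℂ) : moebius α w w = 0 := by
  simp [moebius]

lemma moebiusInv_mul_moebius_zero {α : ℂ} (hα : α ≠ 0) (w lam : ℂ) :
    moebiusInv α w (lam * moebius α w 0) = w * (1 - lam) / (1 - lam * (‖w‖ ^ 2 : ℝ)) := by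
  have hconj : conj w * w = ((‖w‖ ^ 2 : ℝ) : ℂ) := by push_cast; exact Complex.conj_mul' w
  simp only [moebius, moebiusInv, sub_zero, mul_zero, ← hconj]
  field_simp
  ring

/-- for every Moebius automorphism `T` of the closed unit disc there are
unimodular `λ, θ` with `T (θ · T⁻¹(λ · T 0)) = 0`. -/
theorem moebius_rotation_fixes_origin (α w : ℂ) (hα : ‖α‖ = 1) (hw : ‖w‖ < 1) :
    ∃ lam θ : ℂ, ‖lam‖ = 1 ∧ ‖θ‖ = 1 ∧
      moebius α w (θ * moebiusInv α w (lam * moebius α w 0)) = 0 := by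
  have hα0 : α ≠ 0 := norm_ne_zero_iff.mp (hα ▸ one_ne_zero)
  have hs : ‖w‖ ^ 2 < 1 := by nlinarith [norm_nonneg w]
  obtain ⟨lam, hlam, hre⟩ := Complex.exists_norm_eq_one_re_eq (x := (1 + ‖w‖ ^ 2) / 2)
    (abs_le.mpr ⟨by nlinarith [sq_nonneg ‖w‖], by linarith⟩)
  have hlam1 : 1 - lam ≠ 0 := sub_ne_zero.mpr fun h => by
    rw [← h, Complex.one_re] at hre
    linarith
  have hnorm : ‖moebiusInv α w (lam * moebius α w 0)‖ = ‖w‖ := by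
    rw [moebiusInv_mul_moebius_zero hα0, norm_div, norm_mul,
      Complex.norm_one_sub_mul_ofReal_eq_norm_one_sub hlam hre,
      mul_div_cancel_right₀ _ (norm_ne_zero_iff.mpr hlam1)]
  obtain ⟨θ, hθ, hθz⟩ := Complex.exists_norm_eq_one_mul_eq hnorm
  exact ⟨lam, θ, hlam, hθ, by rw [hθz, moebius_self]⟩
end

section
/- Let P, Q be stochastic matrices over Ω. If there exists a ρ-similarity V : Arv(P) → Arv(Q) of subproduct systems (for some *-automorphism ρ of ℓ^∞(Ω)), then the directed graphs of P and Q are isomorphic via the permutation σ_ρ of Ω induced by ρ; that is, (i,j) is an edge of P iff (σ_ρ(i), σ_ρ(j)) is an edge of Q. -/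
/-- Membership in the `n`-th fiber of the Arveson–Stinespring subproduct system `Arv(P)` in its
standard presentation: matrices supported on the support of `P^n` with uniformly `ℓ²`-bounded
columns. -/
def InArvFiber {Ω : Type*} (P : Ω → Ω → ℝ) (n : ℕ) (A : Ω → Ω → ℂ) : Prop :=
  (∀ i j, ¬ 0 < stochPow P n i j → A i j = 0) ∧
  ∃ C : ℝ, ∀ (j : Ω) (s : Finset Ω), ∑ i ∈ s, ‖A i j‖ ^ 2 ≤ C

open Classical in
/-- The subproduct multiplication maps of `Arv(P)` (on simple tensors):
`U_{n,m}(A ⊗ B) = (√(P^{n+m}))^♭ * [(√(P^n) * A) ⬝ (√(P^m) * B)]`, where `*` denotes Schur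
(entrywise) product and `♭` the entrywise reciprocal on the support. -/
noncomputable def arvMul {Ω : Type*} (P : Ω → Ω → ℝ) (n m : ℕ) (A B : Ω → Ω → ℂ) :
    Ω → Ω → ℂ :=
  fun i k =>
    if 0 < stochPow P (n + m) i k then
      (∑' j, ((Real.sqrt (stochPow P n i j) : ℂ) * A i j) *
        ((Real.sqrt (stochPow P m j k) : ℂ) * B j k)) / (Real.sqrt (stochPow P (n + m) i k) : ℂ)
    else 0

open Classical in
/-- The left compression `p A` of a matrix by the projection associated to `C ⊆ Ω`. -/
noncomputable def cutL {Ω : Type*} (C : Set Ω) (A : Ω → Ω → ℂ) : Ω → Ω → ℂ :=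
  fun i j => if i ∈ C then A i j else 0

open Classical in
/-- The right compression `A p` of a matrix by the projection associated to `C ⊆ Ω`. -/
noncomputable def cutR {Ω : Type*} (C : Set Ω) (A : Ω → Ω → ℂ) : Ω → Ω → ℂ :=
  fun i j => if j ∈ C then A i j else 0

/-- The projection `p = ∑_{i ∈ C} p_i` is reducing for `Arv(P)`; for the commutative algebra
`ℓ^∞(Ω)` this is equivalent to `U_{n,m}(p ξ (1-p) ⊗ (1-p) η p) = 0` for all fibers and all
`ξ, η`, which is the formulation used here. -/
def IsReducingSet {Ω : Type*} (P : Ω → Ω → ℝ) (C : Set Ω) : Prop :=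
  ∀ (n m : ℕ) (A B : Ω → Ω → ℂ), InArvFiber P n A → InArvFiber P m B →
    arvMul P n m (cutR Cᶜ (cutL C A)) (cutR C (cutL Cᶜ B)) = 0

/-- The `ℓ^∞(Ω)`-valued inner product norm of a fiber element of `Arv(P)`:
`‖A‖ = sup_j (∑_i |A_{ij}|²)^{1/2}`. -/
noncomputable def fiberNorm {Ω : Type*} (A : Ω → Ω → ℂ) : ℝ :=
  ⨆ j : Ω, Real.sqrt (∑' i : Ω, ‖A i j‖ ^ 2)

/-- A bounded function `Ω → ℂ`, i.e. an element of `ℓ^∞(Ω)`. -/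
def IsBddFun {Ω : Type*} (a : Ω → ℂ) : Prop := ∃ C : ℝ, ∀ i, ‖a i‖ ≤ C

/-- A `ρ`-similarity `V : Arv(P) → Arv(Q)` of subproduct systems, where the *-automorphism
`ρ` of `ℓ^∞(Ω)` is induced by the permutation `σ` of `Ω`: a family of bijective
`ρ`-correspondence morphisms `V_n` between the fibers with `V_0 = ρ`,
uniformly bounded together with their inverses, intertwining the subproduct maps. -/
structure RhoSimilarity {Ω : Type*} (P Q : Ω → Ω → ℝ) (σ : Equiv.Perm Ω)
    (V : ∀ _ : ℕ, (Ω → Ω → ℂ) → (Ω → Ω → ℂ)) : Prop where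
  maps_fiber : ∀ n A, InArvFiber P n A → InArvFiber Q n (V n A)
  additive : ∀ n A B, InArvFiber P n A → InArvFiber P n B → V n (A + B) = V n A + V n B
  smul : ∀ (n : ℕ) (c : ℂ) A, InArvFiber P n A → V n (c • A) = c • V n A
  bimodule : ∀ n A, InArvFiber P n A → ∀ a b : Ω → ℂ, IsBddFun a → IsBddFun b →
    V n (fun i j => a i * A i j * b j) =
      fun i j => a (σ.symm i) * V n A i j * b (σ.symm j)
  injective : ∀ n A A', InArvFiber P n A → InArvFiber P n A' → V n A = V n A' → A = A'
  bounded : ∃ c : ℝ, ∀ n A, InArvFiber P n A → fiberNorm (V n A) ≤ c * fiberNorm A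
  surj_bounded : ∃ c : ℝ, ∀ n B, InArvFiber Q n B →
    ∃ A, InArvFiber P n A ∧ V n A = B ∧ fiberNorm A ≤ c * fiberNorm B
  zeroth : ∀ A, InArvFiber P 0 A → V 0 A = fun i j => A (σ.symm i) (σ.symm j)
  intertwine : ∀ n m A B, InArvFiber P n A → InArvFiber P m B →
    V (n + m) (arvMul P n m A B) = arvMul Q n m (V n A) (V m B)

open scoped Classical

lemma stochPow_one' {Ω : Type*} (P : Ω → Ω → ℝ) (i j : Ω) : stochPow P 1 i j = P i j := by
  show (∑' k, stochPow P 0 i k * P k j) = P i j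
  rw [tsum_eq_single i]
  · simp [stochPow]
  · intro k hk
    simp [stochPow, (Ne.symm hk : ¬ i = k)]

lemma matUnit_fiber {Ω : Type*} {P : Ω → Ω → ℝ} {i j : Ω} (h : 0 < P i j) :
    InArvFiber P 1 (fun x y => if x = i ∧ y = j then (1:ℂ) else 0) := by
  constructor
  · intro x y hxy
    by_cases hc : x = i ∧ y = j
    · exfalso; apply hxy; rw [stochPow_one', hc.1, hc.2]; exact h
    · simp [hc]
  · refine ⟨1, fun y s => ?_⟩
    calc ∑ x ∈ s, ‖(if x = i ∧ y = j then (1:ℂ) else 0)‖ ^ 2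
        ≤ ∑ x ∈ s, (if x = i then 1 else 0) := by
          apply Finset.sum_le_sum
          intro x _
          by_cases hc : x = i ∧ y = j
          · simp [hc]
          · by_cases hx : x = i <;> by_cases hy : y = j <;> simp_all
      _ ≤ 1 := by rw [Finset.sum_ite_eq' s i (fun _ => (1:ℝ))]; split <;> norm_num

/-- if there is a `ρ`-similarity `Arv(P) → Arv(Q)`, then the permutation `σ_ρ`
induced by `ρ` is an isomorphism of the directed graphs of `P` and `Q`. -/
theorem rhoSimilarity_graph_iso {Ω : Type*} [Countable Ω] {P Q : Ω → Ω → ℝ}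
    (hP : IsStochastic P) (hQ : IsStochastic Q) (σ : Equiv.Perm Ω)
    (V : ∀ _ : ℕ, (Ω → Ω → ℂ) → (Ω → Ω → ℂ)) (hV : RhoSimilarity P Q σ V) :
    ∀ i j : Ω, 0 < P i j ↔ 0 < Q (σ i) (σ j) := by
  classical
  have h0fib : InArvFiber P 1 (0 : Ω → Ω → ℂ) :=
    ⟨fun _ _ _ => rfl, 0, fun j s => by simp⟩
  have hV0 : V 1 (0 : Ω → Ω → ℂ) = 0 := by
    have h := hV.additive 1 0 0 h0fib h0fib
    rw [add_zero] at h
    exact add_eq_left.mp h.symm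
  intro i j
  have ha : IsBddFun (fun x => if x = i then (1:ℂ) else 0) :=
    ⟨1, fun x => by show ‖_‖ ≤ _; beta_reduce; split <;> simp⟩
  have hb : IsBddFun (fun y => if y = j then (1:ℂ) else 0) :=
    ⟨1, fun x => by show ‖_‖ ≤ _; beta_reduce; split <;> simp⟩
  constructor
  · intro hPij
    by_contra hq
    have hE := matUnit_fiber (P := P) (i := i) (j := j) hPij
    set E : Ω → Ω → ℂ := fun x y => if x = i ∧ y = j then 1 else 0 with hEdef
    have key : V 1 E = fun x y =>
        (if σ.symm x = i then (1:ℂ) else 0) * V 1 E x y *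
          (if σ.symm y = j then (1:ℂ) else 0) := by
      have h1 := hV.bimodule 1 E hE _ _ ha hb
      have hEab : (fun x y =>
          (if x = i then (1:ℂ) else 0) * E x y * (if y = j then (1:ℂ) else 0)) = E := by
        funext x y
        by_cases hx : x = i <;> by_cases hy : y = j <;> simp [hEdef, hx, hy]
      rw [hEab] at h1
      exact h1
    have hVE0 : V 1 E = 0 := by
      funext x y
      show V 1 E x y = 0
      have hk := congrFun (congrFun key x) y
      by_cases hx : σ.symm x = i
      · by_cases hy : σ.symm y = j
        · have hx' : x = σ i := by rw [← hx, σ.apply_symm_apply]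
          have hy' : y = σ j := by rw [← hy, σ.apply_symm_apply]
          apply (hV.maps_fiber 1 E hE).1 x y
          rw [stochPow_one', hx', hy']
          exact hq
        · rw [hk]; simp [hy]
      · rw [hk]; simp [hx]
    have hE0 : E = 0 := hV.injective 1 E 0 hE h0fib (by rw [hVE0, hV0])
    have h1 := congrFun (congrFun hE0 i) j
    simp [hEdef] at h1
  · intro hQij
    by_contra hp
    have hF := matUnit_fiber (P := Q) (i := σ i) (j := σ j) hQij
    set F : Ω → Ω → ℂ := fun x y => if x = σ i ∧ y = σ j then 1 else 0 with hFdef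
    obtain ⟨c, hc⟩ := hV.surj_bounded
    obtain ⟨A, hA, hVA, -⟩ := hc 1 F hF
    set A' : Ω → Ω → ℂ := fun x y =>
      (if x = i then (1:ℂ) else 0) * A x y * (if y = j then (1:ℂ) else 0) with hA'def
    have hA' : InArvFiber P 1 A' := by
      constructor
      · intro x y hxy
        rw [hA'def]
        simp [hA.1 x y hxy]
      · obtain ⟨C, hC⟩ := hA.2
        refine ⟨C, fun y s => le_trans (Finset.sum_le_sum ?_) (hC y s)⟩
        intro x _
        show ‖(if x = i then (1:ℂ) else 0) * A x y * (if y = j then (1:ℂ) else 0)‖ ^ 2 ≤ _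
        split_ifs <;> simp <;> positivity
    have key : V 1 A' = fun x y =>
        (if σ.symm x = i then (1:ℂ) else 0) * V 1 A x y *
          (if σ.symm y = j then (1:ℂ) else 0) :=
      hV.bimodule 1 A hA _ _ ha hb
    have hVA' : V 1 A' = F := by
      rw [key]
      funext x y
      rw [hVA]
      by_cases hx : σ.symm x = i
      · by_cases hy : σ.symm y = j
        · have hx' : x = σ i := by rw [← hx, σ.apply_symm_apply]
          have hy' : y = σ j := by rw [← hy, σ.apply_symm_apply]
          simp [hFdef, hx, hy, hx', hy']
        · have hy' : ¬ y = σ j := fun h => hy (by rw [h, σ.symm_apply_apply])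
          simp [hFdef, hy, hy']
      · have hx' : ¬ x = σ i := fun h => hx (by rw [h, σ.symm_apply_apply])
        simp [hFdef, hx, hx']
    have hAA' : A = A' := hV.injective 1 A A' hA hA' (by rw [hVA, hVA'])
    have hA0 : A = 0 := by
      funext x y
      show A x y = 0
      have hk := congrFun (congrFun hAA' x) y
      rw [hA'def] at hk
      by_cases hx : x = i
      · by_cases hy : y = j
        · subst hx; subst hy
          apply hA.1 x y
          rw [stochPow_one']
          exact hp
        · rw [hk]; simp [hy]
      · rw [hk]; simp [hx]
    rw [hA0, hV0] at hVA
    have h1 := congrFun (congrFun hVA.symm (σ i)) (σ j)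
    simp [hFdef] at h1
end
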